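/- Every edge of weight 1 is accepted by Ranked Pairs: if all n voters rank τ before τ', then the Ranked Pairs output order places τ before τ'. -/

import Mathlib

/-!
An edge has weight at least `1` exactly when it is unanimous. Since the list is sorted by weight,
every edge examined before `(τ, τ')` is unanimous, so the accepted set at that moment together
with `(τ, τ')` consists of edges going up in the ranking of voter `0`; such edges close no
directed cycle, so `(τ, τ')` is accepted, and accepted edges are never removed.
-/

/-- The fraction of the `n` voters (each voter `i` ranking transactions by the
injective rank function `rank i`) that rank `a` before `b`. -/
def voteWeight {V : Type*} (n : ℕ) (rank : Fin n → V → ℕ) (a b : V) : ℚ :=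
  ((Finset.univ.filter (fun i : Fin n => rank i a < rank i b)).card : ℚ) / n

/-- A set `H` of directed edges has a directed cycle. -/
def hasCycle {V : Type*} (H : Set (V × V)) : Prop :=
  ∃ v : V, Relation.TransGen (fun a b : V => (a, b) ∈ H) v v

/-- The greedy (Ranked Pairs) edge-selection process: iterate over the list of
edges, adding each edge to the accumulated set `H` unless doing so would create a
directed cycle in `H`. -/
noncomputable def greedy {V : Type*} : List (V × V) → Set (V × V) → Set (V × V)
  | [], H => H
  | e :: rest, H =>
      greedy rest
        (@ite _ (hasCycle (insert e H)) (Classical.propDecidable _) H (insert e H))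

section Greedy

variable {V : Type*}

lemma greedy_append (L₁ L₂ : List (V × V)) (H : Set (V × V)) :
    greedy (L₁ ++ L₂) H = greedy L₂ (greedy L₁ H) := by
  induction L₁ generalizing H with
  | nil => rfl
  | cons e rest ih => simp only [List.cons_append, greedy, ih]

lemma subset_greedy (L : List (V × V)) (H : Set (V × V)) : H ⊆ greedy L H := by
  induction L generalizing H with
  | nil => exact subset_rfl
  | cons e rest ih =>
    refine subset_trans ?_ (ih _)
    split
    · exact subset_rfl
    · exact Set.subset_insert e H

lemma greedy_subset (L : List (V × V)) (H : Set (V × V)) :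
    greedy L H ⊆ H ∪ {e | e ∈ L} := by
  induction L generalizing H with
  | nil => simp [greedy]
  | cons e rest ih =>
    refine (ih _).trans ?_
    split
    · exact Set.union_subset_union_right H fun f hf => List.mem_cons_of_mem e hf
    · intro f hf
      simp only [Set.mem_union, Set.mem_insert_iff, Set.mem_ofPred_eq, List.mem_cons] at hf ⊢
      tauto

lemma mem_greedy_cons_of_not_hasCycle {e : V × V} {H : Set (V × V)} (L : List (V × V))
    (h : ¬ hasCycle (insert e H)) : e ∈ greedy (e :: L) H := by
  rw [greedy, if_neg h]
  exact subset_greedy L _ (Set.mem_insert e H)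

lemma not_hasCycle_of_lt {α : Type*} [Preorder α] (f : V → α) {H : Set (V × V)}
    (hH : ∀ e ∈ H, f e.1 < f e.2) : ¬ hasCycle H := by
  rintro ⟨v, hv⟩
  have hlt : ∀ a b, Relation.TransGen (fun a b : V => (a, b) ∈ H) a b → f a < f b := by
    intro a b hab
    induction hab with
    | single h => exact hH _ h
    | tail _ h ih => exact ih.trans (hH _ h)
  exact lt_irrefl _ (hlt v v hv)

lemma mem_greedy_of_lt {α : Type*} [Preorder α] (f : V → α) {H : Set (V × V)}
    {L₁ L₂ : List (V × V)} {e : V × V} (hH : ∀ d ∈ H, f d.1 < f d.2)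
    (hL₁ : ∀ d ∈ L₁, f d.1 < f d.2) (he : f e.1 < f e.2) :
    e ∈ greedy (L₁ ++ e :: L₂) H := by
  rw [greedy_append]
  refine mem_greedy_cons_of_not_hasCycle L₂ (not_hasCycle_of_lt f ?_)
  rintro d (rfl | hd)
  · exact he
  · rcases greedy_subset L₁ H hd with hd | hd
    · exact hH d hd
    · exact hL₁ d hd

end Greedy

lemma one_le_voteWeight_iff {V : Type*} {n : ℕ} (hn : 0 < n) (rank : Fin n → V → ℕ)
    (a b : V) : 1 ≤ voteWeight n rank a b ↔ ∀ i, rank i a < rank i b := by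
  have hcard := (Finset.card_filter_le Finset.univ fun i : Fin n => rank i a < rank i b).ge_iff_eq
  rw [Finset.card_filter_eq_iff, Finset.card_fin] at hcard
  rw [voteWeight, le_div_iff₀ (by exact_mod_cast hn), one_mul, Nat.cast_le, hcard]
  simp only [Finset.mem_univ, true_imp_iff]

theorem weight_one_edge_accepted_general {V : Type*} {n : ℕ} (hn : 0 < n)
    (rank : Fin n → V → ℕ)
    (L : List (V × V))
    (hmemL : ∀ a b : V, a ≠ b → (a, b) ∈ L)
    (hsort : L.Pairwise (fun e f => voteWeight n rank f.1 f.2 ≤ voteWeight n rank e.1 e.2))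
    (τ τ' : V) (hne : τ ≠ τ')
    (hall : ∀ i : Fin n, rank i τ < rank i τ') :
    (τ, τ') ∈ greedy L ∅ := by
  obtain ⟨L₁, L₂, rfl⟩ := List.append_of_mem (hmemL τ τ' hne)
  have hunanimous : 1 ≤ voteWeight n rank τ τ' := (one_le_voteWeight_iff hn rank τ τ').2 hall
  refine mem_greedy_of_lt (rank ⟨0, hn⟩) (by simp) (fun d hd => ?_) (hall _)
  have hle := (List.pairwise_append.mp hsort).2.2 d hd (τ, τ') List.mem_cons_self
  exact (one_le_voteWeight_iff hn rank d.1 d.2).1 (hunanimous.trans hle) _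

/-- Every edge of weight `1` is accepted by Ranked Pairs: if all `n` voters rank `τ`
before `τ'`, then the Ranked Pairs output order places `τ` before `τ'` (the edge
`(τ, τ')` belongs to the final accepted edge set). -/
theorem weight_one_edge_accepted {V : Type*} [Fintype V] {n : ℕ} (hn : 0 < n)
    (rank : Fin n → V → ℕ) (hinj : ∀ i, Function.Injective (rank i))
    (L : List (V × V))
    (hmemL : ∀ a b : V, a ≠ b → (a, b) ∈ L)
    (hnd : L.Nodup)
    (hirr : ∀ e ∈ L, e.1 ≠ e.2)
    (hsort : L.Pairwise (fun e f => voteWeight n rank f.1 f.2 ≤ voteWeight n rank e.1 e.2))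
    (τ τ' : V) (hne : τ ≠ τ')
    (hall : ∀ i : Fin n, rank i τ < rank i τ') :
    (τ, τ') ∈ greedy L ∅ :=
  weight_one_edge_accepted_general hn rank L hmemL hsort τ τ' hne hall
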